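/- arXiv:2511.22393 — 2 statements merged into one kernel-verified Lean document; each statement's English description precedes it below -/
import Mathlib

section
/- Let K ⊆ ℝⁿ be a convex body, and let (t, x) ∈ ℝ × S^{n-1} be such that 0 < vol_n(K_{t,x}) < vol_n(K), where K_{s,y} = {z ∈ K : ⟨z, y⟩ ≥ s}. Then there exist a constant c > 0 and a neighborhood U of (t, x) in ℝ × S^{n-1} such that for all (s, y) ∈ U, the Hausdorff distance between the closure of the symmetric difference K_{t,x} Δ K_{s,y} and the section K ∩ H_{t,x} satisfies d_H(cl(K_{t,x} Δ K_{s,y}), K ∩ H_{t,x}) ≤ c‖x - y‖ + c|t - s|, where H_{t,x} = {z ∈ ℝⁿ : ⟨z, x⟩ = t}. -/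
/-!
Pick `m` in the interior of `K` on the hyperplane `H_{t,x}` (it exists because both sides of the
hyperplane carry positive volume of `K`) and a ball `B(m, r) ⊆ K`. A point `z` of the symmetric
difference lies on one side of `H_{t,x}` and on the other side of `H_{s,y}`, so its distance
`|⟪z, x⟫ - t|` from `H_{t,x}` is `O(‖x - y‖ + |t - s|)`; sliding `z` towards `m ∓ r x` reaches
`K ∩ H_{t,x}` after a fraction `O(|⟪z, x⟫ - t| / r)` of the way. Conversely, a point `p` of
`K ∩ H_{t,x}` on the positive side of `H_{s,y}` reaches `K_{s,y} \ K_{t,x}` by sliding a short way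
towards `m - r x`; if `p ∈ H_{s,y}`, then every open segment from `p` to a point of the symmetric
difference stays inside it, so `p` lies in its closure. None of this needs `(s, y)` to be close
to `(t, x)`, so the neighbourhood can be the whole space.
-/

open MeasureTheory RealInnerProductSpace

open Set Metric

open scoped symmDiff

theorem norm_sub_le_two_mul {E : Type*} [SeminormedAddCommGroup E] {R : ℝ} {a b : E}
    (ha : a ∈ closedBall 0 R) (hb : b ∈ closedBall 0 R) : ‖a - b‖ ≤ 2 * R := by
  rw [mem_closedBall_zero_iff] at ha hb
  linarith [norm_sub_le a b]

theorem Convex.exists_mem_interior_inter_of_measure_ne_zero {E : Type*} [NormedAddCommGroup E]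
    [NormedSpace ℝ E] [MeasurableSpace E] [BorelSpace E] [FiniteDimensional ℝ E]
    (μ : Measure E) [μ.IsAddHaarMeasure] {K P : Set E} (hK : Convex ℝ K) (h : μ (K ∩ P) ≠ 0) :
    (interior K ∩ P).Nonempty := by
  by_contra! hempty
  refine h (measure_mono_null (fun z hz => ?_) (hK.addHaar_frontier μ))
  exact ⟨subset_closure hz.1, fun hzi => hempty.subset ⟨hzi, hz.2⟩⟩

section InnerProductSpace

variable {E : Type*} [NormedAddCommGroup E] [InnerProductSpace ℝ E] {K : Set E}

/-- The cap `K_{t,x}` of the paper. -/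
def cap (K : Set E) (x : E) (t : ℝ) : Set E := {z ∈ K | t ≤ ⟪z, x⟫}

theorem mem_cap_symmDiff_cap {x y z : E} {t s : ℝ} :
    z ∈ cap K x t ∆ cap K y s ↔ z ∈ K ∧ (t ≤ ⟪z, x⟫ ↔ ⟪z, y⟫ < s) := by
  simp only [Set.mem_symmDiff, cap, mem_sep_iff, ← not_le]
  tauto

theorem inner_add_smul_sub_left (z q x : E) (l : ℝ) :
    ⟪z + l • (q - z), x⟫ = ⟪z, x⟫ + l * (⟪q, x⟫ - ⟪z, x⟫) := by
  rw [inner_add_left, real_inner_smul_left, inner_sub_left]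

theorem dist_add_smul_sub {z q : E} {l : ℝ} (hl : 0 ≤ l) :
    dist z (z + l • (q - z)) = l * ‖q - z‖ := by
  rw [dist_self_add_right, norm_smul, Real.norm_of_nonneg hl]

theorem add_smul_mem_and_inner_eq {m x : E} {c r t : ℝ} (hball : closedBall m r ⊆ K)
    (hx : ‖x‖ = 1) (hmx : ⟪m, x⟫ = t) (hc : |c| ≤ r) :
    m + c • x ∈ K ∧ ⟪m + c • x, x⟫ = t + c := by
  refine ⟨hball ?_, ?_⟩
  · rwa [mem_closedBall, dist_self_add_left, norm_smul, hx, Real.norm_eq_abs, mul_one]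
  · rw [inner_add_left, real_inner_smul_left, real_inner_self_eq_norm_sq, hx, hmx]
    ring

theorem abs_inner_sub_le_of_mul_nonpos {z x y : E} {t s : ℝ}
    (h : (⟪z, x⟫ - t) * (⟪z, y⟫ - s) ≤ 0) :
    |⟪z, x⟫ - t| ≤ ‖z‖ * ‖x - y‖ + |t - s| := by
  have hsplit : (⟪z, x⟫ - t) - (⟪z, y⟫ - s) = ⟪z, x - y⟫ - (t - s) := by
    rw [inner_sub_right]; ring
  calc |⟪z, x⟫ - t| ≤ |(⟪z, x⟫ - t) - (⟪z, y⟫ - s)| := sq_le_sq.1 (by nlinarith)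
    _ ≤ |⟪z, x - y⟫| + |t - s| := by rw [hsplit]; exact abs_sub _ _
    _ ≤ ‖z‖ * ‖x - y‖ + |t - s| := by gcongr; exact abs_real_inner_le_norm z _

theorem exists_inner_add_smul_sub_eq {z q x : E} {t : ℝ} (hq : ⟪q, x⟫ < t) (hz : t ≤ ⟪z, x⟫) :
    ∃ l ∈ Icc (0 : ℝ) 1, l * (⟪z, x⟫ - ⟪q, x⟫) = ⟪z, x⟫ - t ∧ ⟪z + l • (q - z), x⟫ = t := by
  have hd : 0 < ⟪z, x⟫ - ⟪q, x⟫ := by linarith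
  refine ⟨(⟪z, x⟫ - t) / (⟪z, x⟫ - ⟪q, x⟫), ⟨by positivity, by rw [div_le_one hd]; linarith⟩,
    div_mul_cancel₀ _ hd.ne', ?_⟩
  rw [inner_add_smul_sub_left]
  field_simp
  ring

theorem Convex.exists_mem_interior_inner_eq (hK : Convex ℝ K) {a b x : E} {t : ℝ}
    (ha : a ∈ interior K) (hb : b ∈ interior K) (hbx : ⟪b, x⟫ < t) (hax : t ≤ ⟪a, x⟫) :
    ∃ m ∈ interior K, ⟪m, x⟫ = t := by
  obtain ⟨l, hl, -, hlx⟩ := exists_inner_add_smul_sub_eq hbx hax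
  exact ⟨_, hK.interior.add_smul_sub_mem ha hb hl, hlx⟩

theorem Convex.exists_mem_interior_inner_eq_of_measure_cap [MeasurableSpace E] [BorelSpace E]
    [FiniteDimensional ℝ E] (μ : Measure E) [μ.IsAddHaarMeasure] (hK : Convex ℝ K) {x : E}
    {t : ℝ} (h1 : 0 < μ (cap K x t)) (h2 : μ (cap K x t) < μ K) :
    ∃ m ∈ interior K, ⟪m, x⟫ = t := by
  obtain ⟨a, ha, hax⟩ :=
    hK.exists_mem_interior_inter_of_measure_ne_zero μ (P := {z | t ≤ ⟪z, x⟫}) h1.ne'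
  have hbelow : μ (K ∩ (cap K x t)ᶜ) ≠ 0 := by
    intro h0
    have hcover : K ⊆ cap K x t ∪ K ∩ (cap K x t)ᶜ := fun z hz => by
      by_cases hzc : z ∈ cap K x t
      exacts [Or.inl hzc, Or.inr ⟨hz, hzc⟩]
    have := (measure_mono hcover).trans (measure_union_le (μ := μ) _ _)
    rw [h0, add_zero] at this
    exact h2.not_ge this
  obtain ⟨b, hb, hbx⟩ := hK.exists_mem_interior_inter_of_measure_ne_zero μ hbelow
  exact hK.exists_mem_interior_inner_eq ha hb
    (lt_of_not_ge fun h => hbx ⟨interior_subset hb, h⟩) hax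

theorem Convex.infDist_inter_hyperplane_le_of_le (hK : Convex ℝ K) {z q x : E} {t r : ℝ}
    (hr : 0 < r) (hz : z ∈ K) (hq : q ∈ K) (hzx : t ≤ ⟪z, x⟫) (hqx : ⟪q, x⟫ ≤ t - r) :
    infDist z (K ∩ {w | ⟪w, x⟫ = t}) ≤ (⟪z, x⟫ - t) / r * ‖q - z‖ := by
  obtain ⟨l, hl, hld, hlx⟩ := exists_inner_add_smul_sub_eq (by linarith) hzx
  have hlr : l ≤ (⟪z, x⟫ - t) / r := by
    rw [le_div_iff₀ hr, ← hld]
    exact mul_le_mul_of_nonneg_left (by linarith) hl.1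
  calc infDist z (K ∩ {w | ⟪w, x⟫ = t}) ≤ dist z (z + l • (q - z)) :=
        infDist_le_dist_of_mem ⟨hK.add_smul_sub_mem hz hq hl, hlx⟩
    _ = l * ‖q - z‖ := dist_add_smul_sub hl.1
    _ ≤ (⟪z, x⟫ - t) / r * ‖q - z‖ := by gcongr

theorem Convex.infDist_inter_hyperplane_le (hK : Convex ℝ K) {R r t : ℝ} {m x z : E}
    (hKR : K ⊆ closedBall 0 R) (hr : 0 < r) (hball : closedBall m r ⊆ K) (hx : ‖x‖ = 1)
    (hmx : ⟪m, x⟫ = t) (hz : z ∈ K) :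
    infDist z (K ∩ {w | ⟪w, x⟫ = t}) ≤ |⟪z, x⟫ - t| / r * (2 * R) := by
  rcases le_total t ⟪z, x⟫ with hzx | hzx
  · obtain ⟨hq, hqx⟩ := add_smul_mem_and_inner_eq (c := -r) hball hx hmx
      (by rw [abs_neg, abs_of_pos hr])
    calc infDist z (K ∩ {w | ⟪w, x⟫ = t}) ≤ (⟪z, x⟫ - t) / r * ‖m + (-r) • x - z‖ :=
          hK.infDist_inter_hyperplane_le_of_le hr hz hq hzx (by linarith)
      _ ≤ |⟪z, x⟫ - t| / r * (2 * R) := by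
          rw [abs_of_nonneg (sub_nonneg.2 hzx)]
          gcongr
          exact norm_sub_le_two_mul (hKR hq) (hKR hz)
  · obtain ⟨hq, hqx⟩ := add_smul_mem_and_inner_eq (c := r) hball hx hmx (abs_of_pos hr).le
    have hsection : {w | ⟪w, -x⟫ = -t} = {w | ⟪w, x⟫ = t} := by
      ext w; simp [inner_neg_right]
    calc infDist z (K ∩ {w | ⟪w, x⟫ = t}) ≤ (⟪z, -x⟫ - -t) / r * ‖m + r • x - z‖ := by
          rw [← hsection]
          refine hK.infDist_inter_hyperplane_le_of_le hr hz hq ?_ ?_ <;>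
            rw [inner_neg_right] <;> linarith
      _ ≤ |⟪z, x⟫ - t| / r * (2 * R) := by
          rw [inner_neg_right, abs_of_nonpos (sub_nonpos.2 hzx), neg_sub_neg, neg_sub]
          gcongr
          exact norm_sub_le_two_mul (hKR hq) (hKR hz)

theorem Convex.infDist_inter_hyperplane_le_of_mem_closure_cap_symmDiff_cap (hK : Convex ℝ K)
    {R r t s : ℝ} {m x y z : E} (hKR : K ⊆ closedBall 0 R) (hr : 0 < r)
    (hball : closedBall m r ⊆ K) (hx : ‖x‖ = 1) (hmx : ⟪m, x⟫ = t)
    (hz : z ∈ closure (cap K x t ∆ cap K y s)) :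
    infDist z (K ∩ {w | ⟪w, x⟫ = t}) ≤ 2 * R / r * (R * ‖x - y‖ + |t - s|) := by
  refine closure_minimal (fun z hz => ?_)
    (isClosed_le (continuous_infDist_pt _) continuous_const) hz
  obtain ⟨hzK, hzxy⟩ := mem_cap_symmDiff_cap.1 hz
  have hzR : ‖z‖ ≤ R := mem_closedBall_zero_iff.1 (hKR hzK)
  have hsign : (⟪z, x⟫ - t) * (⟪z, y⟫ - s) ≤ 0 := by
    rcases le_or_gt t ⟪z, x⟫ with h | h
    · exact mul_nonpos_of_nonneg_of_nonpos (by linarith) (by linarith [hzxy.1 h])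
    · exact mul_nonpos_of_nonpos_of_nonneg (by linarith) (by linarith [mt hzxy.2 h.not_ge])
  calc infDist z (K ∩ {w | ⟪w, x⟫ = t}) ≤ |⟪z, x⟫ - t| / r * (2 * R) :=
        hK.infDist_inter_hyperplane_le hKR hr hball hx hmx hzK
    _ ≤ (R * ‖x - y‖ + |t - s|) / r * (2 * R) := by
        have hR : 0 ≤ R := (norm_nonneg z).trans hzR
        gcongr
        exact (abs_inner_sub_le_of_mul_nonpos hsign).trans (by gcongr)
    _ = 2 * R / r * (R * ‖x - y‖ + |t - s|) := by ring

theorem Convex.mem_closure_cap_symmDiff_cap (hK : Convex ℝ K) {p q x y : E} {t s : ℝ}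
    (hp : p ∈ K) (hpx : ⟪p, x⟫ = t) (hpy : ⟪p, y⟫ = s) (hq : q ∈ cap K x t ∆ cap K y s) :
    p ∈ closure (cap K x t ∆ cap K y s) := by
  obtain ⟨hqK, hqxy⟩ := mem_cap_symmDiff_cap.1 hq
  refine closure_mono ?_ (segment_subset_closure_openSegment (left_mem_segment ℝ p q))
  rw [openSegment_eq_image']
  rintro _ ⟨θ, hθ, rfl⟩
  refine mem_cap_symmDiff_cap.2 ⟨hK.add_smul_sub_mem hp hqK (Ioo_subset_Icc_self hθ), ?_⟩
  have hθx : t ≤ t + θ * (⟪q, x⟫ - t) ↔ t ≤ ⟪q, x⟫ := by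
    rw [le_add_iff_nonneg_right, mul_nonneg_iff_of_pos_left hθ.1, sub_nonneg]
  have hθy : s + θ * (⟪q, y⟫ - s) < s ↔ ⟪q, y⟫ < s := by
    rw [add_lt_iff_neg_left, ← sub_neg (a := ⟪q, y⟫)]
    exact smul_neg_iff_of_pos_left hθ.1
  rwa [inner_add_smul_sub_left, inner_add_smul_sub_left, hpx, hpy, hθx, hθy]

theorem Convex.infDist_cap_symmDiff_cap_le_of_lt (hK : Convex ℝ K) {p q x y : E} {r t s : ℝ}
    (hr : 0 < r) (hp : p ∈ K) (hq : q ∈ K) (hpx : ⟪p, x⟫ = t) (hqx : ⟪q, x⟫ = t - r)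
    (hpy : s < ⟪p, y⟫) :
    infDist p (cap K x t ∆ cap K y s) ≤ (⟪p, y⟫ - s) / r * ‖q - p‖ := by
  set a := ⟪p, y⟫ - s
  set b := r + ‖p - q‖ * ‖x - y‖
  have ha : 0 < a := sub_pos.2 hpy
  have hb : r ≤ b := le_add_of_nonneg_right (by positivity)
  -- `⟪p - q, x⟫ = r`, so `⟪p - q, y⟫` exceeds `r` by at most `‖p - q‖ ‖x - y‖`
  have hpqy : ⟪p, y⟫ - ⟪q, y⟫ ≤ b := by
    have hsplit : ⟪p, y⟫ - ⟪q, y⟫ = r - ⟪p - q, x - y⟫ := by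
      simp only [inner_sub_left, inner_sub_right, hpx, hqx]; ring
    have := real_inner_le_norm (p - q) (y - x)
    rw [norm_sub_rev y x, inner_sub_right] at this
    rw [hsplit, inner_sub_right]
    linarith
  set l := a / (a + b)
  have hl : l ∈ Icc (0 : ℝ) 1 := ⟨by positivity, (div_le_one (by linarith)).2 (by linarith)⟩
  have hlb : l * b ≤ a := by
    rw [div_mul_eq_mul_div, div_le_iff₀ (by linarith)]
    nlinarith
  have hw : p + l • (q - p) ∈ cap K x t ∆ cap K y s := by
    refine mem_cap_symmDiff_cap.2 ⟨hK.add_smul_sub_mem hp hq hl, iff_of_false ?_ ?_⟩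
    · rw [inner_add_smul_sub_left, hpx, hqx, not_le]
      nlinarith [show 0 < l by positivity]
    · rw [inner_add_smul_sub_left, not_lt]
      nlinarith [hl.1]
  calc infDist p (cap K x t ∆ cap K y s) ≤ dist p (p + l • (q - p)) := infDist_le_dist_of_mem hw
    _ = l * ‖q - p‖ := dist_add_smul_sub hl.1
    _ ≤ a / r * ‖q - p‖ := by
        gcongr
        exact div_le_div₀ ha.le le_rfl hr (by linarith)

theorem Convex.infDist_closure_cap_symmDiff_cap_le (hK : Convex ℝ K) {R r t s : ℝ}
    {m x y p : E} (hKR : K ⊆ closedBall 0 R) (hr : 0 < r) (hball : closedBall m r ⊆ K)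
    (hx : ‖x‖ = 1) (hmx : ⟪m, x⟫ = t) (hp : p ∈ K ∩ {w | ⟪w, x⟫ = t}) :
    infDist p (closure (cap K x t ∆ cap K y s)) ≤ 2 * R / r * (R * ‖x - y‖ + |t - s|) := by
  obtain ⟨hpK, hpx : ⟪p, x⟫ = t⟩ := hp
  have hpR : ‖p‖ ≤ R := mem_closedBall_zero_iff.1 (hKR hpK)
  have hR : 0 ≤ R := (norm_nonneg p).trans hpR
  have hbound : 0 ≤ 2 * R / r * (R * ‖x - y‖ + |t - s|) := by positivity
  rcases lt_trichotomy ⟪p, y⟫ s with hpy | hpy | hpy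
  · have hpD : p ∈ cap K x t ∆ cap K y s := mem_cap_symmDiff_cap.2 ⟨hpK, iff_of_true hpx.ge hpy⟩
    rwa [infDist_zero_of_mem (subset_closure hpD)]
  · rcases (cap K x t ∆ cap K y s).eq_empty_or_nonempty with hD | ⟨q, hq⟩
    · rwa [hD, closure_empty, infDist_empty]
    · rwa [infDist_zero_of_mem (hK.mem_closure_cap_symmDiff_cap hpK hpx hpy hq)]
  · obtain ⟨hq, hqx⟩ := add_smul_mem_and_inner_eq (c := -r) hball hx hmx
      (by rw [abs_neg, abs_of_pos hr])
    have hdepth : ⟪p, y⟫ - s ≤ R * ‖x - y‖ + |t - s| := by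
      have := abs_inner_sub_le_of_mul_nonpos (z := p) (x := y) (y := x) (t := s) (s := t)
        (by rw [hpx, sub_self, mul_zero])
      rw [norm_sub_rev, abs_sub_comm s t] at this
      linarith [le_abs_self (⟪p, y⟫ - s), mul_le_mul_of_nonneg_right hpR (norm_nonneg (x - y))]
    calc infDist p (closure (cap K x t ∆ cap K y s))
        ≤ (⟪p, y⟫ - s) / r * ‖m + (-r) • x - p‖ := by
          rw [infDist_closure]
          exact hK.infDist_cap_symmDiff_cap_le_of_lt hr hpK hq hpx (by linarith) hpy
      _ ≤ (R * ‖x - y‖ + |t - s|) / r * (2 * R) := by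
          gcongr
          exact norm_sub_le_two_mul (hKR hq) (hKR hpK)
      _ = 2 * R / r * (R * ‖x - y‖ + |t - s|) := by ring

end InnerProductSpace

theorem hausdorffDist_symmDiff_caps_general
    (n : ℕ) (K : Set (EuclideanSpace ℝ (Fin n)))
    (hKconv : Convex ℝ K) (hKcomp : IsCompact K)
    (t : ℝ) (x : EuclideanSpace ℝ (Fin n)) (hx : ‖x‖ = 1)
    (h1 : 0 < volume {z ∈ K | t ≤ ⟪z, x⟫})
    (h2 : volume {z ∈ K | t ≤ ⟪z, x⟫} < volume K) :
    ∃ c : ℝ, 0 < c ∧ ∃ U ∈ nhds ((t, x) : ℝ × EuclideanSpace ℝ (Fin n)),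
      ∀ s : ℝ, ∀ y : EuclideanSpace ℝ (Fin n), (s, y) ∈ U → ‖y‖ = 1 →
        Metric.hausdorffDist
          (closure (({z ∈ K | t ≤ ⟪z, x⟫} \ {z ∈ K | s ≤ ⟪z, y⟫}) ∪
            ({z ∈ K | s ≤ ⟪z, y⟫} \ {z ∈ K | t ≤ ⟪z, x⟫})))
          (K ∩ {z | ⟪z, x⟫ = t})
        ≤ c * ‖x - y‖ + c * |t - s| := by
  obtain ⟨m, hm, hmx⟩ := hKconv.exists_mem_interior_inner_eq_of_measure_cap volume h1 h2
  obtain ⟨r, hr, hball⟩ := nhds_basis_closedBall.mem_iff.1 (mem_interior_iff_mem_nhds.1 hm)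
  obtain ⟨R, hR, hKR⟩ := hKcomp.isBounded.subset_closedBall_lt 1 0
  refine ⟨2 * R * R / r, by positivity, univ, Filter.univ_mem, fun s y _ _ => ?_⟩
  calc hausdorffDist (closure (cap K x t ∆ cap K y s)) (K ∩ {z | ⟪z, x⟫ = t})
      ≤ 2 * R / r * (R * ‖x - y‖ + |t - s|) :=
        hausdorffDist_le_of_infDist (by positivity)
          (fun _ hz => hKconv.infDist_inter_hyperplane_le_of_mem_closure_cap_symmDiff_cap hKR hr
            hball hx hmx hz)
          (fun _ hp => hKconv.infDist_closure_cap_symmDiff_cap_le hKR hr hball hx hmx hp)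
    _ ≤ 2 * R / r * (R * ‖x - y‖ + R * |t - s|) := by
        gcongr
        exact le_mul_of_one_le_left (abs_nonneg _) hR.le
    _ = 2 * R * R / r * ‖x - y‖ + 2 * R * R / r * |t - s| := by ring

/-- **Lemma (Hausdorff-distance estimate for symmetric differences of caps).**
Let `K ⊆ ℝⁿ` be a convex body and `(t,x) ∈ ℝ × S^{n-1}` with
`0 < vol_n(K_{t,x}) < vol_n(K)`, where `K_{s,y} = {z ∈ K : ⟪z,y⟫ ≥ s}`.  Then
there exist `c > 0` and a neighborhood `U` of `(t,x)` such that for all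
`(s,y) ∈ U` with `y` a unit vector,
`d_H(cl(K_{t,x} Δ K_{s,y}), K ∩ H_{t,x}) ≤ c‖x - y‖ + c|t - s|`,
where `H_{t,x} = {z : ⟪z,x⟫ = t}`. -/
theorem hausdorffDist_symmDiff_caps
    (n : ℕ) (K : Set (EuclideanSpace ℝ (Fin n)))
    (hKconv : Convex ℝ K) (hKcomp : IsCompact K) (hKint : (interior K).Nonempty)
    (t : ℝ) (x : EuclideanSpace ℝ (Fin n)) (hx : ‖x‖ = 1)
    (h1 : 0 < volume {z ∈ K | t ≤ ⟪z, x⟫})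
    (h2 : volume {z ∈ K | t ≤ ⟪z, x⟫} < volume K) :
    ∃ c : ℝ, 0 < c ∧ ∃ U ∈ nhds ((t, x) : ℝ × EuclideanSpace ℝ (Fin n)),
      ∀ s : ℝ, ∀ y : EuclideanSpace ℝ (Fin n), (s, y) ∈ U → ‖y‖ = 1 →
        Metric.hausdorffDist
          (closure (({z ∈ K | t ≤ ⟪z, x⟫} \ {z ∈ K | s ≤ ⟪z, y⟫}) ∪
            ({z ∈ K | s ≤ ⟪z, y⟫} \ {z ∈ K | t ≤ ⟪z, x⟫})))
          (K ∩ {z | ⟪z, x⟫ = t})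
        ≤ c * ‖x - y‖ + c * |t - s| :=
  hausdorffDist_symmDiff_caps_general n K hKconv hKcomp t x hx h1 h2
end

section
/- Let K ⊆ ℝⁿ be a convex body, and let (t, x) ∈ ℝ × S^{n-1} be such that 0 < vol_n({z ∈ K : ⟨z, x⟩ ≥ t}) < vol_n(K). Then there exist a constant c > 0 and a neighborhood U of (t, x) in ℝ × S^{n-1} such that for all (s, y) ∈ U, the Hausdorff distance between the sections K ∩ H_{t,x} and K ∩ H_{s,y} satisfies d_H(K ∩ H_{t,x}, K ∩ H_{s,y}) ≤ c‖x - y‖ + c|t - s|, where H_{s,y} = {z ∈ ℝⁿ : ⟨z, y⟩ = s}. -/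
/-!
The hyperplane `H_{t,x}` meets the interior of `K`: otherwise `K` lies on one side of it, and then
`{z ∈ K | t ≤ ⟪z, x⟫}` is either contained in the null set `H_{t,x}` or all of `K`. So there is a
ball `B(z₀, 2r) ⊆ K` centred on `H_{t,x}`, and for `(s, y)` close to `(t, x)` the projection of
`z₀` to `H_{s,y}` is the centre of a ball `B(z₁, r) ⊆ K`. Moving a point `p ∈ K` along the segment
towards the far side of such a ball reaches the hyperplane after a distance proportional to the
distance of `p` from it, which is `O(‖x - y‖ + |t - s|)` for points of the other section.
-/

open MeasureTheory RealInnerProductSpace Metric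

section InnerProductSpace

variable {E : Type*} [NormedAddCommGroup E] [InnerProductSpace ℝ E]

theorem measure_inner_eq_eq_zero [FiniteDimensional ℝ E] [MeasurableSpace E] [BorelSpace E]
    (μ : Measure E) [μ.IsAddHaarMeasure] {x : E} (hx : x ≠ 0) (t : ℝ) :
    μ {z | ⟪z, x⟫ = t} = 0 := by
  set S : Submodule ℝ E := LinearMap.ker (innerₛₗ ℝ x)
  have hS : S ≠ ⊤ := fun h ↦ hx <| inner_self_eq_zero.1 (h ▸ Submodule.mem_top : x ∈ S)
  set c : E := (t / ‖x‖ ^ 2) • x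
  have hc : ⟪x, c⟫ = t := by
    rw [real_inner_smul_right, real_inner_self_eq_norm_sq]
    field_simp [norm_ne_zero_iff.2 hx]
  have hset : {z | ⟪z, x⟫ = t} = (· + -c) ⁻¹' (S : Set E) := by
    ext z
    simp [S, inner_add_right, hc, add_neg_eq_zero, real_inner_comm z x]
  rw [hset, measure_preimage_add_right, Measure.addHaar_submodule μ S hS]

theorem Convex.exists_mem_interior_inner_eq_s10 [FiniteDimensional ℝ E] [MeasurableSpace E]
    [BorelSpace E] (μ : Measure E) [μ.IsAddHaarMeasure] {K : Set E} (hK : Convex ℝ K)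
    (hKint : (interior K).Nonempty) {x : E} (hx : x ≠ 0) {t : ℝ}
    (h₁ : 0 < μ {z ∈ K | t ≤ ⟪z, x⟫}) (h₂ : μ {z ∈ K | t ≤ ⟪z, x⟫} < μ K) :
    ∃ z ∈ interior K, ⟪z, x⟫ = t := by
  have hcl : K ⊆ closure (interior K) :=
    hK.closure_interior_eq_closure_of_nonempty_interior hKint ▸ subset_closure
  have hcont : Continuous fun z ↦ ⟪z, x⟫ := by fun_prop
  obtain ⟨a, ha, hat⟩ : ∃ a ∈ interior K, t ≤ ⟪a, x⟫ := by
    by_contra! h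
    have hKle : K ⊆ {z | ⟪z, x⟫ ≤ t} :=
      hcl.trans (closure_minimal (fun z hz ↦ (h z hz).le) (isClosed_le hcont continuous_const))
    refine h₁.ne' (measure_mono_null (fun z hz ↦ ?_) (measure_inner_eq_eq_zero μ hx t))
    exact le_antisymm (hKle hz.1) hz.2
  obtain ⟨b, hb, hbt⟩ : ∃ b ∈ interior K, ⟪b, x⟫ ≤ t := by
    by_contra! h
    have hKge : K ⊆ {z | t ≤ ⟪z, x⟫} :=
      hcl.trans (closure_minimal (fun z hz ↦ (h z hz).le) (isClosed_le continuous_const hcont))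
    exact h₂.ne (congrArg μ (Set.sep_eq_self_iff_mem_true.2 hKge))
  obtain ⟨z, hz, hzt⟩ :=
    hK.interior.isPreconnected.intermediate_value hb ha hcont.continuousOn ⟨hbt, hat⟩
  exact ⟨z, hz, hzt⟩

section Projection

variable {K : Set E} {M ρ s : ℝ} {y z p : E}

theorem Convex.exists_mem_inner_eq_dist_le_of_le (hK : Convex ℝ K)
    (hKM : K ⊆ closedBall 0 M) (hy : ‖y‖ = 1) (hρ : 0 < ρ) (hball : closedBall z ρ ⊆ K)
    (hz : ⟪z, y⟫ = s) (hp : p ∈ K) (hps : s ≤ ⟪p, y⟫) :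
    ∃ q ∈ K, ⟪q, y⟫ = s ∧ dist p q ≤ 2 * M / ρ * (⟪p, y⟫ - s) := by
  set f := ⟪p, y⟫ - s
  have hf : 0 ≤ f := sub_nonneg.2 hps
  set w := z - ρ • y
  have hw : w ∈ K := hball <| by
    simp [w, norm_smul, hy, abs_of_pos hρ]
  set μ := f / (f + ρ)
  have hμ : μ * (f + ρ) = f := div_mul_cancel₀ f (by positivity)
  have hμ₁ : μ ≤ 1 := (div_le_one (by positivity)).2 (by linarith)
  refine ⟨(1 - μ) • p + μ • w, hK hp hw (by linarith) (by positivity) (by ring), ?_, ?_⟩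
  · rw [inner_add_left, real_inner_smul_left, real_inner_smul_left, inner_sub_left,
      real_inner_smul_left, real_inner_self_eq_norm_sq, hy, hz,
      show ⟪p, y⟫ = s + f by ring]
    linear_combination -hμ
  · have hpw : ‖p - w‖ ≤ 2 * M := (norm_sub_le p w).trans <| by
      linarith [mem_closedBall_zero_iff.1 (hKM hp), mem_closedBall_zero_iff.1 (hKM hw)]
    calc dist p ((1 - μ) • p + μ • w) = μ * ‖p - w‖ := by
          rw [dist_eq_norm, show p - ((1 - μ) • p + μ • w) = μ • (p - w) by module, norm_smul,
            Real.norm_of_nonneg (by positivity)]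
      _ ≤ f / ρ * (2 * M) := by
          gcongr
          exact div_le_div_of_nonneg_left hf hρ (by linarith)
      _ = 2 * M / ρ * f := by ring

theorem Convex.exists_mem_inner_eq_dist_le (hK : Convex ℝ K)
    (hKM : K ⊆ closedBall 0 M) (hy : ‖y‖ = 1) (hρ : 0 < ρ) (hball : closedBall z ρ ⊆ K)
    (hz : ⟪z, y⟫ = s) (hp : p ∈ K) :
    ∃ q ∈ K, ⟪q, y⟫ = s ∧ dist p q ≤ 2 * M / ρ * |⟪p, y⟫ - s| := by
  rcases le_total s ⟪p, y⟫ with h | h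
  · rw [abs_of_nonneg (sub_nonneg.2 h)]
    exact hK.exists_mem_inner_eq_dist_le_of_le hKM hy hρ hball hz hp h
  · obtain ⟨q, hq, hqy, hd⟩ := hK.exists_mem_inner_eq_dist_le_of_le (y := -y) (s := -s) hKM
      (by rwa [norm_neg]) hρ hball (by rw [inner_neg_right, hz]) hp
      (by rw [inner_neg_right]; linarith)
    rw [inner_neg_right] at hqy hd
    rw [abs_of_nonpos (sub_nonpos.2 h)]
    exact ⟨q, hq, neg_inj.1 hqy, hd.trans_eq (by ring)⟩

end Projection

theorem abs_inner_sub_le_of_inner_eq {M t s : ℝ} {x y p : E} (hp : ‖p‖ ≤ M) (hpx : ⟪p, x⟫ = t) :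
    |⟪p, y⟫ - s| ≤ M * ‖x - y‖ + |t - s| :=
  calc |⟪p, y⟫ - s| = |⟪p, y - x⟫ + (t - s)| := by rw [inner_sub_right, hpx]; ring_nf
    _ ≤ |⟪p, y - x⟫| + |t - s| := abs_add_le _ _
    _ ≤ ‖p‖ * ‖y - x‖ + |t - s| := by gcongr; exact abs_real_inner_le_norm _ _
    _ ≤ M * ‖x - y‖ + |t - s| := by rw [norm_sub_rev]; gcongr

theorem Convex.hausdorffDist_inter_inner_eq_le {K : Set E} {M ρ t s : ℝ} {x y z₀ z₁ : E}
    (hK : Convex ℝ K) (hKM : K ⊆ closedBall 0 M) (hx : ‖x‖ = 1) (hy : ‖y‖ = 1) (hρ : 0 < ρ)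
    (hball₀ : closedBall z₀ ρ ⊆ K) (hz₀ : ⟪z₀, x⟫ = t)
    (hball₁ : closedBall z₁ ρ ⊆ K) (hz₁ : ⟪z₁, y⟫ = s) :
    hausdorffDist (K ∩ {z | ⟪z, x⟫ = t}) (K ∩ {z | ⟪z, y⟫ = s})
      ≤ 2 * M / ρ * (M * ‖x - y‖ + |t - s|) := by
  have hnorm : ∀ p ∈ K, ‖p‖ ≤ M := fun p hp ↦ mem_closedBall_zero_iff.1 (hKM hp)
  have hM : 0 ≤ M := (norm_nonneg _).trans (hnorm z₀ (hball₀ (mem_closedBall_self hρ.le)))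
  refine hausdorffDist_le_of_mem_dist (by positivity) ?_ ?_
  · rintro p ⟨hp, hpx⟩
    obtain ⟨q, hq, hqy, hd⟩ := hK.exists_mem_inner_eq_dist_le hKM hy hρ hball₁ hz₁ hp
    exact ⟨q, ⟨hq, hqy⟩, hd.trans (by gcongr; exact abs_inner_sub_le_of_inner_eq (hnorm p hp) hpx)⟩
  · rintro q ⟨hq, hqy⟩
    obtain ⟨p, hp, hpx, hd⟩ := hK.exists_mem_inner_eq_dist_le hKM hx hρ hball₀ hz₀ hq
    refine ⟨p, ⟨hp, hpx⟩, hd.trans ?_⟩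
    rw [norm_sub_rev x y, abs_sub_comm t s]
    gcongr
    exact abs_inner_sub_le_of_inner_eq (hnorm q hq) hqy

end InnerProductSpace

/-- **Lemma (Hausdorff-distance estimate for sections).**  Let `K ⊆ ℝⁿ` be a
convex body and `(t,x) ∈ ℝ × S^{n-1}` with
`0 < vol_n {z ∈ K : ⟪z,x⟫ ≥ t} < vol_n K`.  Then there exist `c > 0` and a
neighborhood `U` of `(t,x)` such that for all `(s,y) ∈ U` with `y` a unit
vector, `d_H(K ∩ H_{t,x}, K ∩ H_{s,y}) ≤ c‖x - y‖ + c|t - s|`, where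
`H_{s,y} = {z : ⟪z,y⟫ = s}`. -/
theorem hausdorffDist_sections
    (n : ℕ) (K : Set (EuclideanSpace ℝ (Fin n)))
    (hKconv : Convex ℝ K) (hKcomp : IsCompact K) (hKint : (interior K).Nonempty)
    (t : ℝ) (x : EuclideanSpace ℝ (Fin n)) (hx : ‖x‖ = 1)
    (h1 : 0 < volume {z ∈ K | t ≤ ⟪z, x⟫})
    (h2 : volume {z ∈ K | t ≤ ⟪z, x⟫} < volume K) :
    ∃ c : ℝ, 0 < c ∧ ∃ U ∈ nhds ((t, x) : ℝ × EuclideanSpace ℝ (Fin n)),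
      ∀ s : ℝ, ∀ y : EuclideanSpace ℝ (Fin n), (s, y) ∈ U → ‖y‖ = 1 →
        Metric.hausdorffDist (K ∩ {z | ⟪z, x⟫ = t}) (K ∩ {z | ⟪z, y⟫ = s})
          ≤ c * ‖x - y‖ + c * |t - s| := by
  obtain ⟨z₀, hz₀K, hz₀⟩ := hKconv.exists_mem_interior_inner_eq_s10 volume hKint
    (norm_ne_zero_iff.1 (hx.trans_ne one_ne_zero)) h1 h2
  obtain ⟨r, hr, hball₀⟩ : ∃ r > 0, closedBall z₀ (2 * r) ⊆ K := by
    obtain ⟨ε, hε, hεK⟩ := nhds_basis_closedBall.mem_iff.1 (mem_interior_iff_mem_nhds.1 hz₀K)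
    exact ⟨ε / 2, by positivity, by rwa [mul_div_cancel₀ _ two_ne_zero]⟩
  obtain ⟨M₀, hKM₀⟩ := hKcomp.isBounded.subset_closedBall 0
  set M := max M₀ 1
  have hM : 1 ≤ M := le_max_right _ _
  have hKM : K ⊆ closedBall 0 M := hKM₀.trans (closedBall_subset_closedBall (le_max_left _ _))
  let foot : ℝ × EuclideanSpace ℝ (Fin n) → EuclideanSpace ℝ (Fin n) :=
    fun q ↦ z₀ + (q.1 - ⟪z₀, q.2⟫) • q.2
  have hU : foot ⁻¹' ball z₀ r ∈ nhds (t, x) :=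
    (by fun_prop : Continuous foot).continuousAt.preimage_mem_nhds
      (by simpa [foot, hz₀] using ball_mem_nhds z₀ hr)
  refine ⟨2 * M * M / r, by positivity, _, hU, fun s y hsy hy ↦ ?_⟩
  have hfoot : ⟪foot (s, y), y⟫ = s := by
    simp [foot, inner_add_left, real_inner_smul_left, hy]
  have hball₁ : closedBall (foot (s, y)) r ⊆ K :=
    (closedBall_subset_closedBall' (by linarith [mem_ball.1 hsy])).trans hball₀
  calc _ ≤ 2 * M / r * (M * ‖x - y‖ + |t - s|) :=
        hKconv.hausdorffDist_inter_inner_eq_le hKM hx hy hr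
          ((closedBall_subset_closedBall (by linarith)).trans hball₀) hz₀ hball₁ hfoot
    _ ≤ 2 * M * M / r * ‖x - y‖ + 2 * M * M / r * |t - s| := by
        rw [mul_add, ← mul_assoc, mul_div_right_comm (2 * M) M r]
        gcongr
        exact le_mul_of_one_le_right (by positivity) hM
end
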